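/- arXiv:2104.13857 — 2 statements merged into one kernel-verified Lean document; each statement's English description precedes it below -/
import Mathlib

section
/- Let L be a finite meet-semidistributive lattice. Then the meet of all dual atoms of Con L is the smallest congruence δ of L such that L/δ is distributive. -/
/-- A finite lattice is planar iff its order dimension is at most 2
(Baker–Fishburn–Roberts): the order is the intersection of two linear orders. -/
def IsPlanarLattice (L : Type*) [Lattice L] : Prop :=
  ∃ r₁ r₂ : L → L → Prop, IsLinearOrder L r₁ ∧ IsLinearOrder L r₂ ∧
    ∀ a b : L, a ≤ b ↔ r₁ a b ∧ r₂ a b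

/-- Semimodularity: `a ⊓ b ⋖ a` implies `b ⋖ a ⊔ b`. -/
def IsSemimodular (L : Type*) [Lattice L] : Prop :=
  ∀ a b : L, a ⊓ b ⋖ a → b ⋖ a ⊔ b

/-- A lattice contains a sublattice isomorphic to `M₃` iff it has three distinct
elements with pairwise equal meets and pairwise equal joins. -/
def HasM3Sublattice (L : Type*) [Lattice L] : Prop :=
  ∃ a b c : L, a ≠ b ∧ a ≠ c ∧ b ≠ c ∧
    a ⊓ b = a ⊓ c ∧ a ⊓ c = b ⊓ c ∧ a ⊔ b = a ⊔ c ∧ a ⊔ c = b ⊔ c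

/-- A lattice congruence. -/
structure LatticeCon' (L : Type*) [Lattice L] where
  r : L → L → Prop
  iseqv : Equivalence r
  sup_compat : ∀ {a b c d : L}, r a b → r c d → r (a ⊔ c) (b ⊔ d)
  inf_compat : ∀ {a b c d : L}, r a b → r c d → r (a ⊓ c) (b ⊓ d)

namespace LatticeCon'

variable {L : Type*} [Lattice L]

def toSetoid (α : LatticeCon' L) : Setoid L := ⟨α.r, α.iseqv⟩

/-- The quotient lattice `L/α`. -/
def Quot (α : LatticeCon' L) : Type _ := Quotient α.toSetoid

/-- The quotient map. -/
def mkQ (α : LatticeCon' L) (x : L) : α.Quot := Quotient.mk α.toSetoid x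

instance (α : LatticeCon' L) : Max α.Quot :=
  ⟨Quotient.map₂ (· ⊔ ·) fun _ _ h _ _ h' => α.sup_compat h h'⟩

instance (α : LatticeCon' L) : Min α.Quot :=
  ⟨Quotient.map₂ (· ⊓ ·) fun _ _ h _ _ h' => α.inf_compat h h'⟩

@[simp] theorem mkQ_sup (α : LatticeCon' L) (x y : L) :
    α.mkQ x ⊔ α.mkQ y = α.mkQ (x ⊔ y) := rfl

@[simp] theorem mkQ_inf (α : LatticeCon' L) (x y : L) :
    α.mkQ x ⊓ α.mkQ y = α.mkQ (x ⊓ y) := rfl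

instance (α : LatticeCon' L) : Lattice α.Quot :=
  Lattice.mk'
    (fun a b => Quotient.inductionOn₂ a b fun x y => congrArg _ (sup_comm x y))
    (fun a b c => Quotient.inductionOn₃ a b c fun x y z => congrArg _ (sup_assoc x y z))
    (fun a b => Quotient.inductionOn₂ a b fun x y => congrArg _ (inf_comm x y))
    (fun a b c => Quotient.inductionOn₃ a b c fun x y z => congrArg _ (inf_assoc x y z))
    (fun a b => Quotient.inductionOn₂ a b fun x y => congrArg _ (sup_inf_self (a := x) (b := y)))
    (fun a b => Quotient.inductionOn₂ a b fun x y => congrArg _ (inf_sup_self (a := x) (b := y)))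

theorem ext' {α β : LatticeCon' L} (h : ∀ a b, α.r a b ↔ β.r a b) : α = β := by
  have hr : α.r = β.r := funext fun a => funext fun b => propext (h a b)
  cases α; cases β; cases hr; rfl

instance : PartialOrder (LatticeCon' L) where
  le α β := ∀ ⦃a b : L⦄, α.r a b → β.r a b
  le_refl _ _ _ h := h
  le_trans _ _ _ h h' _ _ hab := h' (h hab)
  le_antisymm _ _ h h' := ext' fun a b => ⟨fun hab => h hab, fun hab => h' hab⟩

instance : OrderTop (LatticeCon' L) where
  top := ⟨fun _ _ => True, ⟨fun _ => trivial, fun _ => trivial, fun _ _ => trivial⟩,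
    fun _ _ => trivial, fun _ _ => trivial⟩
  le_top _ _ _ _ := trivial

instance : OrderBot (LatticeCon' L) where
  bot := ⟨Eq, eq_equivalence, fun h h' => by rw [h, h'], fun h h' => by rw [h, h']⟩
  bot_le _ _ _ h := h ▸ (Equivalence.refl (iseqv _) _)

instance : InfSet (LatticeCon' L) where
  sInf S :=
    ⟨fun a b => ∀ θ ∈ S, θ.r a b,
     ⟨fun _ θ _ => θ.iseqv.refl _,
      fun h θ hθ => θ.iseqv.symm (h θ hθ),
      fun h h' θ hθ => θ.iseqv.trans (h θ hθ) (h' θ hθ)⟩,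
     fun h h' θ hθ => θ.sup_compat (h θ hθ) (h' θ hθ),
     fun h h' θ hθ => θ.inf_compat (h θ hθ) (h' θ hθ)⟩

/-- The principal congruence generated by collapsing the pair `(a, b)`. -/
def conPair (a b : L) : LatticeCon' L := sInf {θ : LatticeCon' L | θ.r a b}

end LatticeCon'

/-- A distributive lattice (as a property). -/
def IsDistribQuot (X : Type*) [Lattice X] : Prop :=
  ∀ x y z : X, x ⊓ (y ⊔ z) = x ⊓ y ⊔ x ⊓ z

/-- A prime ideal of a lattice, as a set. -/
def IsPrimeIdealSet {L : Type*} [Lattice L] (P : Set L) : Prop :=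
  P.Nonempty ∧ P ≠ Set.univ ∧
  (∀ x y : L, x ≤ y → y ∈ P → x ∈ P) ∧
  (∀ x y : L, x ∈ P → y ∈ P → x ⊔ y ∈ P) ∧
  (∀ x y : L, x ⊓ y ∈ P → x ∈ P ∨ y ∈ P)

/-! Every coatom `α` of `Con L` has a simple meet-semidistributive quotient. An atom `j` of
`L/α` is join-prime by semidistributivity, so `x ↦ (j ≤ x)` is a lattice homomorphism to `Prop`;
its kernel is a proper congruence, hence trivial, and `L/α` embeds into `Prop`. So every `L/α`
is distributive, and so is the quotient by their meet. Conversely, if `L/θ` is distributive,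
two `θ`-inequivalent elements are separated by a join-prime element of the finite lattice `L/θ`,
and the kernel of the induced homomorphism `L → Prop` is a coatom of `Con L` separating them. -/

def IsMeetSemidistrib (L : Type*) [Lattice L] : Prop :=
  ∀ x y z : L, x ⊓ y = x ⊓ z → x ⊓ y = x ⊓ (y ⊔ z)

section

open Function

variable {L : Type*} [Lattice L]

theorem IsMeetSemidistrib.supPrime_of_isAtom [OrderBot L] (hL : IsMeetSemidistrib L) {j : L}
    (hj : IsAtom j) : SupPrime j := by
  refine ⟨fun h => hj.1 h.eq_bot, fun x y hxy => ?_⟩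
  by_contra! ⟨hx, hy⟩
  rw [hj.not_le_iff_disjoint, disjoint_iff] at hx hy
  have : j ⊓ (x ⊔ y) = ⊥ := (hL j x y (hx.trans hy.symm)).symm.trans hx
  exact hj.1 (by rwa [inf_eq_left.mpr hxy] at this)

def supPrimeHom {j : L} (hj : SupPrime j) : LatticeHom L Prop where
  toFun x := j ≤ x
  map_sup' _ _ := propext hj.le_sup
  map_inf' _ _ := propext le_inf_iff

theorem isDistribQuot_of_injective {M : Type*} [DistribLattice M] (f : LatticeHom L M)
    (hf : Injective f) : IsDistribQuot L := fun x y z => hf (by simp [inf_sup_left])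

theorem exists_supPrime_le_not_le [Finite L] (hL : IsDistribQuot L) {u v : L} (h : ¬u ≤ v) :
    ∃ j, SupPrime j ∧ j ≤ u ∧ ¬j ≤ v := by
  obtain ⟨j, hju, hj⟩ := exists_minimal_le_of_wellFoundedLT (fun x => ¬x ≤ v) u h
  have inf_le_of_not_le : ∀ x, ¬j ≤ x → j ⊓ x ≤ v := fun x hx => by
    by_contra hxv
    exact hx ((hj.le_of_le hxv inf_le_left).trans inf_le_right)
  refine ⟨j, ⟨fun hmin => hj.1 ((hmin inf_le_left).trans inf_le_right), fun x y hxy => ?_⟩,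
    hju, hj.1⟩
  by_contra! ⟨hx, hy⟩
  refine hj.1 ?_
  calc j = j ⊓ (x ⊔ y) := (inf_eq_left.mpr hxy).symm
    _ = j ⊓ x ⊔ j ⊓ y := hL j x y
    _ ≤ v := sup_le (inf_le_of_not_le x hx) (inf_le_of_not_le y hy)

namespace LatticeCon'

instance [Finite L] (α : LatticeCon' L) : Finite α.Quot := Quotient.finite _

theorem mkQ_surjective (α : LatticeCon' L) : Surjective α.mkQ := Quotient.mk_surjective

theorem mkQ_eq_mkQ_iff {α : LatticeCon' L} {a b : L} : α.mkQ a = α.mkQ b ↔ α.r a b := Quotient.eq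

def mkQHom (α : LatticeCon' L) : LatticeHom L α.Quot where
  toFun := α.mkQ
  map_sup' _ _ := rfl
  map_inf' _ _ := rfl

def comap {M : Type*} [Lattice M] (f : LatticeHom L M) (ψ : LatticeCon' M) : LatticeCon' L where
  r x y := ψ.r (f x) (f y)
  iseqv := ⟨fun _ => ψ.iseqv.refl _, ψ.iseqv.symm, ψ.iseqv.trans⟩
  sup_compat h h' := by simpa only [map_sup] using ψ.sup_compat h h'
  inf_compat h h' := by simpa only [map_inf] using ψ.inf_compat h h'

abbrev ker {M : Type*} [Lattice M] (f : LatticeHom L M) : LatticeCon' L := comap f ⊥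

theorem comap_injective {M : Type*} [Lattice M] {f : LatticeHom L M} (hf : Surjective f) :
    Injective (comap f) := fun ψ ψ' h => ext' fun u v => by
  obtain ⟨⟨x, rfl⟩, ⟨y, rfl⟩⟩ := And.intro (hf u) (hf v)
  exact iff_of_eq (congrArg (fun θ : LatticeCon' L => θ.r x y) h)

theorem comap_top {M : Type*} [Lattice M] (f : LatticeHom L M) : comap f ⊤ = ⊤ := rfl

theorem ker_mkQHom (α : LatticeCon' L) : ker α.mkQHom = α := ext' fun _ _ => mkQ_eq_mkQ_iff

theorem eq_bot_or_eq_top_of_isCoatom {α : LatticeCon' L} (hα : IsCoatom α)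
    (ψ : LatticeCon' α.Quot) : ψ = ⊥ ∨ ψ = ⊤ := by
  have hle : α ≤ comap α.mkQHom ψ := fun a b h => by
    show ψ.r (α.mkQ a) (α.mkQ b)
    rw [mkQ_eq_mkQ_iff.mpr h]
    exact ψ.iseqv.refl _
  rcases hα.le_iff.mp hle with h | h
  · exact .inr (comap_injective α.mkQ_surjective (h.trans (comap_top _).symm))
  · exact .inl (comap_injective α.mkQ_surjective (h.trans (ker_mkQHom α).symm))

theorem nontrivial_quot_of_isCoatom {α : LatticeCon' L} (hα : IsCoatom α) :
    Nontrivial α.Quot := by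
  by_contra! h
  exact hα.1 (ext' fun _ _ =>
    ⟨fun _ => trivial, fun _ => mkQ_eq_mkQ_iff.mp (Subsingleton.elim _ _)⟩)

theorem isCoatom_ker {f : LatticeHom L Prop} {a b : L} (ha : f a) (hb : ¬f b) :
    IsCoatom (ker f) := by
  refine ⟨fun h => hb ?_, fun β hβ => ?_⟩
  · have hab : (ker f).r a b := h ▸ trivial
    exact cast hab ha
  obtain ⟨p, q, hpq, hne⟩ : ∃ p q, β.r p q ∧ f p ≠ f q := by
    by_contra! h
    exact hβ.not_ge fun p q => h p q
  have r_p : ∀ x, β.r x p := fun x => by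
    by_cases hx : f x = f p
    · exact hβ.le hx
    · have hxq : f x = f q := by simp only [ne_eq, eq_iff_iff] at *; tauto
      exact β.iseqv.trans (hβ.le hxq) (β.iseqv.symm hpq)
  exact eq_top_iff.mpr fun x y _ => β.iseqv.trans (r_p x) (β.iseqv.symm (r_p y))

theorem isDistribQuot_quot_iff {α : LatticeCon' L} :
    IsDistribQuot α.Quot ↔ ∀ a b c : L, α.r (a ⊓ (b ⊔ c)) (a ⊓ b ⊔ a ⊓ c) := by
  refine ⟨fun h a b c => mkQ_eq_mkQ_iff.mp (h (α.mkQ a) (α.mkQ b) (α.mkQ c)), fun h => ?_⟩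
  rintro ⟨a⟩ ⟨b⟩ ⟨c⟩
  exact mkQ_eq_mkQ_iff.mpr (h a b c)

theorem isDistribQuot_sInf {S : Set (LatticeCon' L)} (hS : ∀ θ ∈ S, IsDistribQuot θ.Quot) :
    IsDistribQuot (sInf S).Quot :=
  isDistribQuot_quot_iff.mpr fun a b c θ hθ => isDistribQuot_quot_iff.mp (hS θ hθ) a b c

theorem exists_isGreatest_setOf_r [Finite L] (α : LatticeCon' L) (a : L) :
    ∃ e, IsGreatest {x | α.r a x} e := by
  obtain ⟨e, -, he⟩ := exists_maximal_ge_of_wellFoundedGT (α.r a) a (α.iseqv.refl a)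
  refine ⟨e, he.1, fun x hx => le_sup_left.trans (he.le_of_ge ?_ le_sup_right)⟩
  simpa only [sup_idem] using α.sup_compat hx he.1

theorem r_sup_of_r_of_le {α : LatticeCon' L} {d e y : L} (hde : α.r d e) (hdy : d ≤ y) :
    α.r y (y ⊔ e) := by
  simpa only [sup_eq_left.mpr hdy] using α.sup_compat (α.iseqv.refl y) hde

theorem isMeetSemidistrib_quot [Finite L] (hL : IsMeetSemidistrib L) (α : LatticeCon' L) :
    IsMeetSemidistrib α.Quot := by
  rintro ⟨a⟩ ⟨b⟩ ⟨c⟩ h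
  have hbc : α.r (a ⊓ b) (a ⊓ c) := mkQ_eq_mkQ_iff.mp h
  obtain ⟨e, hbe, he⟩ := exists_isGreatest_setOf_r α (a ⊓ b)
  have ha : α.r a (a ⊔ e) := r_sup_of_r_of_le hbe inf_le_left
  have hb : α.r b (b ⊔ e) := r_sup_of_r_of_le hbe inf_le_right
  have hc : α.r c (c ⊔ e) := r_sup_of_r_of_le (α.iseqv.trans (α.iseqv.symm hbc) hbe) inf_le_right
  -- `e` is the top of the class of `a ⊓ b`, so raising `a, b, c` by `e` makes both meets `e`
  have inf_eq_e : ∀ {y}, α.r (a ⊓ b) ((a ⊔ e) ⊓ (y ⊔ e)) → (a ⊔ e) ⊓ (y ⊔ e) = e :=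
    fun h => le_antisymm (he h) (le_inf le_sup_right le_sup_right)
  have hsd := hL (a ⊔ e) (b ⊔ e) (c ⊔ e) ((inf_eq_e (α.inf_compat ha hb)).trans
    (inf_eq_e (α.iseqv.trans hbc (α.inf_compat ha hc))).symm)
  show α.mkQ a ⊓ α.mkQ b = α.mkQ a ⊓ (α.mkQ b ⊔ α.mkQ c)
  rw [mkQ_eq_mkQ_iff.mpr ha, mkQ_eq_mkQ_iff.mpr hb, mkQ_eq_mkQ_iff.mpr hc]
  exact congrArg α.mkQ hsd

end LatticeCon'

open LatticeCon'

theorem isDistribQuot_of_simple [Finite L] [Nontrivial L] (hL : IsMeetSemidistrib L)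
    (hs : ∀ ψ : LatticeCon' L, ψ = ⊥ ∨ ψ = ⊤) : IsDistribQuot L := by
  have := Fintype.ofFinite L
  let := Fintype.toBoundedOrder L
  obtain ⟨j, hj⟩ := IsAtomic.exists_atom (α := L)
  let f := supPrimeHom (hL.supPrime_of_isAtom hj)
  have hker : ker f = ⊥ := (hs _).resolve_right fun h => by
    have hjbot : (ker f).r j ⊥ := h ▸ trivial
    exact hj.1 (le_bot_iff.mp (cast hjbot le_rfl))
  refine isDistribQuot_of_injective f fun x y hxy => ?_
  have hxy' : (ker f).r x y := hxy
  rwa [hker] at hxy'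

theorem isDistribQuot_quot_of_isCoatom [Finite L] (hL : IsMeetSemidistrib L)
    {α : LatticeCon' L} (hα : IsCoatom α) : IsDistribQuot α.Quot :=
  haveI := nontrivial_quot_of_isCoatom hα
  isDistribQuot_of_simple (isMeetSemidistrib_quot hL α) (eq_bot_or_eq_top_of_isCoatom hα)

theorem exists_isCoatom_not_r_of_not_le [Finite L] {θ : LatticeCon' L}
    (hθ : IsDistribQuot θ.Quot) {a b : L} (hab : ¬θ.mkQ a ≤ θ.mkQ b) :
    ∃ ψ : LatticeCon' L, IsCoatom ψ ∧ ¬ψ.r a b := by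
  obtain ⟨j, hj, hja, hjb⟩ := exists_supPrime_le_not_le hθ hab
  let f := (supPrimeHom hj).comp θ.mkQHom
  exact ⟨ker f, isCoatom_ker (f := f) hja hjb, fun h => hjb (cast h hja)⟩

theorem sInf_isCoatom_le [Finite L] {θ : LatticeCon' L} (hθ : IsDistribQuot θ.Quot) :
    sInf {ψ : LatticeCon' L | IsCoatom ψ} ≤ θ := by
  intro a b hab
  by_contra hθab
  have hne : θ.mkQ a ≠ θ.mkQ b := fun h => hθab (mkQ_eq_mkQ_iff.mp h)
  rcases hne.not_le_or_not_ge with hba | hab'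
  · obtain ⟨ψ, hψ, hψab⟩ := exists_isCoatom_not_r_of_not_le hθ hba
    exact hψab (hab ψ hψ)
  · obtain ⟨ψ, hψ, hψba⟩ := exists_isCoatom_not_r_of_not_le hθ hab'
    exact hψba (ψ.iseqv.symm (hab ψ hψ))

end

/-- In a finite meet-semidistributive lattice, the meet of all dual atoms of `Con L`
is the least congruence with distributive quotient. -/
theorem inf_coatoms_is_least_distributive {L : Type*} [Lattice L] [Fintype L]
    (hsd : ∀ x y z : L, x ⊓ y = x ⊓ z → x ⊓ y = x ⊓ (y ⊔ z)) :
    IsDistribQuot (sInf {θ : LatticeCon' L | IsCoatom θ}).Quot ∧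
    ∀ θ : LatticeCon' L, IsDistribQuot θ.Quot →
      sInf {θ' : LatticeCon' L | IsCoatom θ'} ≤ θ :=
  ⟨LatticeCon'.isDistribQuot_sInf fun _ hθ => isDistribQuot_quot_of_isCoatom hsd hθ,
    fun _ => sInf_isCoatom_le⟩
end

section
/- Let L be a finite semimodular lattice, α a congruence, and A ≺ B congruence classes in L/α with 1_A and 0_B incomparable, a_0 = 1_A ∧ 0_B, and a_0 ≺ a_1 ≺ ... ≺ a_t = 1_A a maximal chain in [a_0, 1_A]. Then with b_i = a_i ∨ 0_B, the interval [a_0, b_t] has length t + 1, i.e., the chains a_0 ≺ a_1 ≺ ... ≺ a_t ≺ b_t and a_0 ≺ b_0 ≤ b_1 ≤ ... ≤ b_t both have length t + 1. -/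
/-!
Joining with `0_B` sends the maximal chain `a₀ ≺ ⋯ ≺ a_t` to `b₀ ≤ ⋯ ≤ b_t`, and by
semimodularity every step `b_i ≤ b_{i+1}` is a cover or an equality. Since `a₀ ≺ 0_B = b₀`,
the interval `[a₀, b_t]` then has a maximal chain through the `b_i` that is one shorter for every
collapsed step, besides the maximal chain `a₀ ≺ ⋯ ≺ a_t ≺ b_t` of length `t + 1`; Jordan–Hölder
rules out any collapse. The covers `a₀ ≺ b₀` and `a_t ≺ b_t` both come from `1_A ∧ 0_B ≺ 0_B`:
an element strictly between them would lie in a class strictly between `A` and `B`.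
-/

namespace LatticeCon'

variable {L : Type*} [Lattice L] (α : LatticeCon' L)

theorem mkQ_eq_mkQ {x y : L} : α.mkQ x = α.mkQ y ↔ α.r x y :=
  Quotient.eq

theorem mkQ_monotone : Monotone α.mkQ := fun x y h =>
  inf_eq_left.mp ((α.mkQ_inf x y).trans (congrArg α.mkQ (inf_eq_left.mpr h)))

theorem inf_covBy_of_mkQ_covBy {oA tA oB tB : L}
    (hA : Set.Icc oA tA = {x : L | α.r x oA}) (hB : Set.Icc oB tB = {x : L | α.r x oB})
    (hcov : α.mkQ oA ⋖ α.mkQ oB) (hBA : ¬ oB ≤ tA) : tA ⊓ oB ⋖ oB := by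
  have memA : ∀ x, α.r x oA ↔ oA ≤ x ∧ x ≤ tA := fun x => (Set.ext_iff.mp hA x).symm
  have memB : ∀ x, α.r x oB ↔ oB ≤ x ∧ x ≤ tB := fun x => (Set.ext_iff.mp hB x).symm
  have hoA : oA ≤ tA := ((memA oA).mp (α.iseqv.refl oA)).2
  have hoAB : oA ≤ oB := by
    have : α.r (oA ⊓ oB) oA :=
      (α.mkQ_eq_mkQ).mp ((α.mkQ_inf oA oB).symm.trans (inf_eq_left.mpr hcov.le))
    exact ((memA _).mp this).1.trans inf_le_right
  refine ⟨inf_le_right.lt_of_ne fun h => hBA (h ▸ inf_le_left), fun x hlt hgt => ?_⟩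
  rcases hcov.eq_or_eq (α.mkQ_monotone ((le_inf hoA hoAB).trans hlt.le))
      (α.mkQ_monotone hgt.le) with h | h
  · exact hlt.not_ge (le_inf ((memA x).mp ((α.mkQ_eq_mkQ).mp h)).2 hgt.le)
  · exact hgt.not_ge ((memB x).mp ((α.mkQ_eq_mkQ).mp h)).1

end LatticeCon'

section UpperModular

variable {L : Type*} [Lattice L] [IsUpperModularLattice L] {x y : L}

theorem CovBy.sup_covBy_sup_or_eq (hxy : x ⋖ y) (c : L) : x ⊔ c ⋖ y ⊔ c ∨ x ⊔ c = y ⊔ c := by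
  rcases hxy.eq_or_eq (le_inf hxy.le le_sup_left) (inf_le_left : y ⊓ (x ⊔ c) ≤ y) with h | h
  · left
    have hinf : y ⊓ (x ⊔ c) ⋖ y := h.symm ▸ hxy
    simpa only [← sup_assoc, sup_eq_left.mpr hxy.le] using covBy_sup_of_inf_covBy_left hinf
  · exact Or.inr (le_antisymm (sup_le_sup_right hxy.le c) (sup_le (inf_eq_left.mp h) le_sup_right))

end UpperModular

inductive CoverChain {L : Type*} [Preorder L] : L → L → ℕ → Prop
  | refl (x : L) : CoverChain x x 0
  | cons {x y z : L} {n : ℕ} : x ⋖ y → CoverChain y z n → CoverChain x z (n + 1)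

namespace CoverChain

variable {L : Type*}

section PartialOrder

variable [PartialOrder L] {x y z : L} {m n : ℕ}

theorem le (h : CoverChain x y n) : x ≤ y := by
  induction h with
  | refl => exact le_rfl
  | cons hxy _ ih => exact hxy.le.trans ih

theorem trans (h₁ : CoverChain x y m) (h₂ : CoverChain y z n) : CoverChain x z (m + n) := by
  induction h₁ with
  | refl => simpa using h₂
  | cons hxy _ ih => rw [Nat.add_right_comm]; exact cons hxy (ih h₂)

theorem snoc (h : CoverChain x y n) (hyz : y ⋖ z) : CoverChain x z (n + 1) :=
  h.trans (cons hyz (refl z))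

theorem eq_zero_of_self (h : CoverChain x x n) : n = 0 := by
  cases h with
  | refl => rfl
  | cons hxy h' => exact absurd (hxy.lt.trans_le h'.le) (lt_irrefl x)

theorem of_fin {n : ℕ} {a : Fin (n + 1) → L} (ha : ∀ i : Fin n, a i.castSucc ⋖ a i.succ)
    {i j : Fin (n + 1)} (hij : i ≤ j) : CoverChain (a i) (a j) (j - i) := by
  induction j using Fin.induction with
  | zero =>
    obtain rfl := Fin.le_zero_iff.mp hij
    simpa using refl (a 0)
  | succ j ih =>
    rcases hij.lt_or_eq with hlt | rfl
    · have hij' : i ≤ j.castSucc := Fin.le_castSucc_iff.mpr hlt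
      convert (ih hij').snoc (ha j) using 1
      simp only [Fin.val_succ, Fin.val_castSucc]
      have : (i : ℕ) ≤ j := hij'
      omega
    · simpa using refl (a j.succ)

end PartialOrder

section UpperModular

variable [Lattice L] [IsUpperModularLattice L] {x y z : L} {m n : ℕ}

theorem exists_of_covBy (h : CoverChain x y n) (hxz : x ⋖ z) (hzy : z ≤ y) :
    ∃ m, n = m + 1 ∧ CoverChain z y m := by
  induction h generalizing z with
  | refl x => exact absurd hzy hxz.lt.not_ge
  | @cons x x₁ y n hx₁ h ih =>
    by_cases hz : z = x₁
    · exact ⟨n, rfl, hz ▸ h⟩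
    · -- two distinct covers of `x` meet in `x`, so their join covers both
      have hmeet : z ⊓ x₁ = x := hxz.wcovBy.inf_eq hx₁.wcovBy hz
      obtain ⟨m, rfl, h'⟩ := ih (covBy_sup_of_inf_covBy_left (hmeet ▸ hxz)) (sup_le hzy h.le)
      exact ⟨m + 1, rfl, cons (covBy_sup_of_inf_covBy_right (hmeet ▸ hx₁)) h'⟩

theorem length_eq (h₁ : CoverChain x y m) (h₂ : CoverChain x y n) : m = n := by
  induction h₁ generalizing n with
  | refl x => exact h₂.eq_zero_of_self.symm
  | cons hx₁ h ih =>
    obtain ⟨k, rfl, h'⟩ := h₂.exists_of_covBy hx₁ h.le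
    rw [ih h']

theorem exists_sup_right (h : CoverChain x y n) (c : L) :
    ∃ m ≤ n, CoverChain (x ⊔ c) (y ⊔ c) m := by
  induction h with
  | refl x => exact ⟨0, le_rfl, refl _⟩
  | cons hxy _ ih =>
    obtain ⟨m, hm, h'⟩ := ih
    rcases hxy.sup_covBy_sup_or_eq c with hc | he
    · exact ⟨m + 1, by omega, cons hc h'⟩
    · exact ⟨m, by omega, he ▸ h'⟩

end UpperModular

end CoverChain

theorem sup_covBy_sup_of_covBy_chain {L : Type*} [Lattice L] [IsUpperModularLattice L]
    {n : ℕ} {a : Fin (n + 1) → L} (ha : ∀ i : Fin n, a i.castSucc ⋖ a i.succ) {c : L}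
    (h₀ : a 0 ⋖ a 0 ⊔ c) (hₙ : a (Fin.last n) ⋖ a (Fin.last n) ⊔ c) (i : Fin n) :
    a i.castSucc ⊔ c ⋖ a i.succ ⊔ c := by
  -- a collapsed step would give a cover chain from `a 0` to `a (Fin.last n) ⊔ c` of length at
  -- most `n`, next to the one of length `n + 1` through `a (Fin.last n)`
  refine ((ha i).sup_covBy_sup_or_eq c).resolve_right fun heq => ?_
  obtain ⟨m₁, hm₁, h₁⟩ := (CoverChain.of_fin ha (Fin.zero_le i.castSucc)).exists_sup_right c
  obtain ⟨m₂, hm₂, h₂⟩ := (CoverChain.of_fin ha (Fin.le_last i.succ)).exists_sup_right c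
  have hlong := (CoverChain.of_fin ha (Fin.zero_le (Fin.last n))).snoc hₙ
  have hshort := CoverChain.cons h₀ (h₁.trans (heq ▸ h₂))
  have hlen := hlong.length_eq hshort
  simp only [Fin.val_last, Fin.val_zero, Fin.val_castSucc, Fin.val_succ] at hm₁ hm₂ hlen
  omega

theorem ladder_interval_length_general {L : Type*} [Lattice L]
    (hsemi : IsSemimodular L)
    (α : LatticeCon' L) (oA tA oB tB : L)
    (hA : Set.Icc oA tA = {x : L | α.r x oA})
    (hB : Set.Icc oB tB = {x : L | α.r x oB})
    (hcov : α.mkQ oA ⋖ α.mkQ oB)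
    (hincomp : ¬ tA ≤ oB ∧ ¬ oB ≤ tA)
    (t : ℕ) (a : Fin (t + 1) → L)
    (ha0 : a 0 = tA ⊓ oB) (hat : a (Fin.last t) = tA)
    (hchain : ∀ i : Fin t, a i.castSucc ⋖ a i.succ) :
    (a (Fin.last t) ⋖ a (Fin.last t) ⊔ oB) ∧
    (a 0 ⋖ a 0 ⊔ oB) ∧
    (∀ i : Fin t, a i.castSucc ⊔ oB ≤ a i.succ ⊔ oB) ∧
    (∀ i : Fin t, (a i.castSucc ⊔ oB) ⋖ (a i.succ ⊔ oB)) := by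
  have : IsUpperModularLattice L := ⟨hsemi _ _⟩
  have hkey : tA ⊓ oB ⋖ oB := α.inf_covBy_of_mkQ_covBy hA hB hcov hincomp.2
  have h₀ : a 0 ⋖ a 0 ⊔ oB := by rwa [ha0, sup_eq_right.mpr inf_le_right]
  have hₜ : a (Fin.last t) ⋖ a (Fin.last t) ⊔ oB := hat ▸ covBy_sup_of_inf_covBy_right hkey
  exact ⟨hₜ, h₀, fun i => sup_le_sup_right (hchain i).le oB,
    sup_covBy_sup_of_covBy_chain hchain h₀ hₜ⟩

/-- Jordan–Hölder for the ladder: the interval `[a₀, b_t]` has length `t + 1`;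
both chains `a₀ ≺ ⋯ ≺ a_t ≺ b_t` and `a₀ ≺ b₀ ≤ ⋯ ≤ b_t` are maximal chains
of length `t + 1` (so all the steps `b_i ≤ b_{i+1}` are covers). -/
theorem ladder_interval_length {L : Type*} [Lattice L] [Fintype L]
    (hsemi : IsSemimodular L)
    (α : LatticeCon' L) (oA tA oB tB : L)
    (hA : Set.Icc oA tA = {x : L | α.r x oA})
    (hB : Set.Icc oB tB = {x : L | α.r x oB})
    (hcov : α.mkQ oA ⋖ α.mkQ oB)
    (hincomp : ¬ tA ≤ oB ∧ ¬ oB ≤ tA)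
    (t : ℕ) (a : Fin (t + 1) → L)
    (ha0 : a 0 = tA ⊓ oB) (hat : a (Fin.last t) = tA)
    (hchain : ∀ i : Fin t, a i.castSucc ⋖ a i.succ) :
    (a (Fin.last t) ⋖ a (Fin.last t) ⊔ oB) ∧
    (a 0 ⋖ a 0 ⊔ oB) ∧
    (∀ i : Fin t, a i.castSucc ⊔ oB ≤ a i.succ ⊔ oB) ∧
    (∀ i : Fin t, (a i.castSucc ⊔ oB) ⋖ (a i.succ ⊔ oB)) :=
  ladder_interval_length_general hsemi α oA tA oB tB hA hB hcov hincomp t a ha0 hat hchain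
end
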